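/- arXiv:math/9812029 — 3 statements merged into one kernel-verified Lean document; each statement's English description precedes it below -/
import Mathlib

section
/- Define φ on pairs (s,i) with s ∈ {1,…,8} and i ∈ ℤ_{>0} (thinking of (s,i) as the part X_s(−i)) by: φ(1,i) = (3i−2, 2), φ(2,i) = (3i−1, 0), φ(3,i) = (3i−1, 1), φ(4,i) = (3i, 0), φ(5,i) = (3i, 1), φ(6,i) = (3i+1, 1), φ(7,i) = (3i+1, 0), φ(8,i) = (3i+2, 2). Then: (a) φ is injective with image {(r,0) : r ≥ 2} ∪ {(r,1) : r ≥ 2} ∪ {(r,2) : r ≡ ±1 (mod 3), r ≠ 2}; and (b) for every colored partition π supported on {(s,j) : j < 0}, one has ρ ⊄ π for every ρ ∈ R if and only if the 3-colored partition f defined by f(φ(s,i)) = π(s,−i) (and f = 0 off the image of φ) satisfies conditions (1)–(5). -/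
/-- A colored partition: a finitely supported multiplicity function on parts `X_s(j)`,
where `s` is the color and `j ∈ ℤ` the degree.  (Genuine colored partitions have
colors in `{1,…,8}`, expressed by `cpValid`.) -/
abbrev CPart := (ℕ × ℤ) →₀ ℕ

/-- The colored partition consisting of the single part `X_s(j)`. -/
noncomputable def Xp (s : ℕ) (j : ℤ) : CPart := Finsupp.single (s, j) 1

/-- The colors of all parts lie in `{1,…,8}`. -/
def cpValid (π : CPart) : Prop := ∀ p ∈ π.support, 1 ≤ p.1 ∧ p.1 ≤ 8

/-- The length `ℓ(π)`: the total number of parts. -/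
def cpLength (π : CPart) : ℕ := π.sum fun _ m => m

/-- The degree `|π|`: the sum of the degrees of the parts. -/
def cpDeg (π : CPart) : ℤ := π.sum fun p m => (m : ℤ) * p.2

/-- The shape `sh(π)`: the multiset of the degrees of the parts. -/
def cpShape (π : CPart) : Multiset ℤ := π.sum fun p m => Multiset.replicate m p.2

/-- `ρ ⊂ π` : `ρ` is a subpartition of `π`. -/
def cpSub (ρ π : CPart) : Prop := ∀ p, ρ p ≤ π p

/-- The color pairs `(i₁,i₂)` for elements `X_{i₁}(j)X_{i₂}(j)` of `lt(R̄)`. -/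
def eqPairs : List (ℕ × ℕ) :=
  [(1,1),(2,1),(2,2),(3,1),(3,2),(3,3),(4,2),(4,3),(4,4),(5,1),(5,2),(5,3),(5,4),(5,5),
   (6,2),(6,4),(6,5),(6,6),(7,3),(7,4),(7,5),(7,6),(7,7),(8,5),(8,6),(8,7),(8,8)]

/-- The color pairs `(i₁,i₂)` for elements `X_{i₁}(j−1)X_{i₂}(j)` of `lt(R̄)`. -/
def adjPairs : List (ℕ × ℕ) :=
  [(1,1),(1,2),(1,3),(1,4),(1,5),(1,6),(1,7),(1,8),(2,2),(2,4),(2,6),(2,7),(2,8),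
   (3,3),(3,5),(3,6),(3,7),(3,8),(4,7),(4,8),(5,6),(5,8),(6,6),(6,8),(7,7),(7,8),(8,8)]

/-- The set `lt(R̄)` of leading terms of the quadratic relations. -/
def ltR : Set CPart :=
  {ρ | ∃ j : ℤ, ∃ p ∈ eqPairs, ρ = Xp p.1 j + Xp p.2 j} ∪
  {ρ | ∃ j : ℤ, ∃ p ∈ adjPairs, ρ = Xp p.1 (j-1) + Xp p.2 j}

/-- `E(π) = {ρ ∈ lt(R̄) : ρ ⊂ π}`. -/
def Eset (π : CPart) : Set CPart := {ρ | ρ ∈ ltR ∧ cpSub ρ π}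

/-- `N(π) = max(#E(π) − 1, 0)`. -/
noncomputable def Npi (π : CPart) : ℕ := (Eset π).ncard - 1

/-- The set `R`: `lt(R̄)` together with the two families of cubic leading terms. -/
def Rset : Set CPart :=
  ltR ∪ {ρ | ∃ j : ℤ, ρ = Xp 3 (j-1) + Xp 4 j + Xp 1 j ∨
    ρ = Xp 8 (j-1) + Xp 4 (j-1) + Xp 6 j}

/-- The `𝔥`-weight of the color `s`, written in the basis `(α₁, α₂)`. -/
def wcol : ℕ → ℤ × ℤ
  | 1 => (1, 1)
  | 2 => (1, 0)
  | 3 => (0, 1)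
  | 4 => (0, 0)
  | 5 => (0, 0)
  | 6 => (0, -1)
  | 7 => (-1, 0)
  | 8 => (-1, -1)
  | _ => (0, 0)

/-- The weight `wt(π) ∈ ℤ²`. -/
def cpWt (π : CPart) : ℤ × ℤ := π.sum fun p m => m • wcol p.1

/-- The map `φ` sending the part `X_s(−i)` (given by the pair `(s,i)`, `1 ≤ s ≤ 8`, `i ≥ 1`)
to a 3-colored part `(r,c)` (colors: 0 = plain, 1 = underlined, 2 = doubly underlined). -/
def phi : ℕ → ℕ → ℕ × Fin 3
  | 1, i => (3*i - 2, 2)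
  | 2, i => (3*i - 1, 0)
  | 3, i => (3*i - 1, 1)
  | 4, i => (3*i, 0)
  | 5, i => (3*i, 1)
  | 6, i => (3*i + 1, 1)
  | 7, i => (3*i + 1, 0)
  | 8, i => (3*i + 2, 2)
  | _, _ => (0, 0)

/-- Conditions (1)–(5) on a 3-colored partition, including that each part appears
at most once. -/
def ColoredCond (f : (ℕ × Fin 3) →₀ ℕ) : Prop :=
  (∀ p, f p ≤ 1) ∧
  (∀ r : ℕ, 0 < f (r, 2) → r % 3 = 1 ∨ r % 3 = 2) ∧
  (f (1, 0) = 0 ∧ f (1, 1) = 0 ∧ f (2, 2) = 0) ∧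
  (∀ a b : ℕ × Fin 3, a ≠ b → a.1 ≤ b.1 + 1 → b.1 ≤ a.1 + 1 → f a + f b ≤ 1) ∧
  (∀ i : ℕ,
    f (3*i+2, 0) + f (3*i+3, 0) + f (3*i+4, 1) + f (3*i+5, 0) ≤ 1 ∧
    f (3*i+2, 1) + f (3*i+3, 1) + f (3*i+4, 2) + f (3*i+5, 1) ≤ 1 ∧
    f (3*i+2, 2) + f (3*i+3, 1) + f (3*i+4, 0) + f (3*i+5, 2) ≤ 1 ∧
    f (3*i+1, 0) + f (3*i+2, 1) + f (3*i+3, 0) + f (3*i+4, 0) ≤ 1 ∧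
    f (3*i+1, 1) + f (3*i+2, 2) + f (3*i+3, 1) + f (3*i+4, 1) ≤ 1 ∧
    f (3*i+1, 2) + f (3*i+2, 0) + f (3*i+3, 1) + f (3*i+4, 2) ≤ 1) ∧
  (∀ i : ℕ,
    f (3*i+1, 1) + f (3*i+3, 0) + f (3*i+5, 2) ≤ 2 ∧
    f (3*i+1, 2) + f (3*i+3, 0) + f (3*i+5, 1) ≤ 2)

section Helpers

variable {π : CPart}

lemma cpSub_pair {P Q : ℕ × ℤ} (h : P ≠ Q) (π : CPart) :
    cpSub (Finsupp.single P 1 + Finsupp.single Q 1) π ↔ 1 ≤ π P ∧ 1 ≤ π Q := by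
  constructor
  · intro hs
    refine ⟨?_, ?_⟩
    · have := hs P; simpa [Finsupp.single_apply, h, h.symm] using this
    · have := hs Q; simpa [Finsupp.single_apply, h, h.symm] using this
  · rintro ⟨h1, h2⟩ p
    rcases eq_or_ne p P with rfl | hp
    · simpa [Finsupp.single_apply, h, h.symm] using h1
    · rcases eq_or_ne p Q with rfl | hq
      · simpa [Finsupp.single_apply, h, h.symm, hp, hp.symm] using h2
      · simp [Finsupp.single_apply, hp.symm, hq.symm]

lemma cpSub_same (P : ℕ × ℤ) (π : CPart) :
    cpSub (Finsupp.single P 1 + Finsupp.single P 1) π ↔ 2 ≤ π P := by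
  constructor
  · intro hs; have := hs P; simpa using this
  · intro h p
    rcases eq_or_ne p P with rfl | hp
    · simpa using h
    · simp [Finsupp.single_apply, hp.symm]

lemma cpSub_triple {P Q R : ℕ × ℤ} (hpq : P ≠ Q) (hpr : P ≠ R) (hqr : Q ≠ R) (π : CPart) :
    cpSub (Finsupp.single P 1 + Finsupp.single Q 1 + Finsupp.single R 1) π ↔
      1 ≤ π P ∧ 1 ≤ π Q ∧ 1 ≤ π R := by
  constructor
  · intro hs
    refine ⟨?_, ?_, ?_⟩
    · have := hs P; simpa [Finsupp.single_apply, hpq, hpq.symm, hpr, hpr.symm] using this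
    · have := hs Q; simpa [Finsupp.single_apply, hpq, hpq.symm, hqr, hqr.symm] using this
    · have := hs R; simpa [Finsupp.single_apply, hpr, hpr.symm, hqr, hqr.symm] using this
  · rintro ⟨h1, h2, h3⟩ p
    rcases eq_or_ne p P with rfl | hp
    · simpa [Finsupp.single_apply, hpq, hpq.symm, hpr, hpr.symm] using h1
    · rcases eq_or_ne p Q with rfl | hq
      · simpa [Finsupp.single_apply, hpq, hpq.symm, hqr, hqr.symm, hp.symm] using h2
      · rcases eq_or_ne p R with rfl | hr
        · simpa [Finsupp.single_apply, hpr.symm, hqr.symm, hp.symm, hq.symm] using h3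
        · simp [Finsupp.single_apply, hp.symm, hq.symm, hr.symm]

lemma cpSub_Xp_same (s : ℕ) (j : ℤ) (π : CPart) :
    cpSub (Xp s j + Xp s j) π ↔ 2 ≤ π (s, j) := by
  unfold Xp; exact cpSub_same _ _

lemma cpSub_Xp_pair {s t : ℕ} {j k : ℤ} (h : ((s, j) : ℕ × ℤ) ≠ (t, k)) (π : CPart) :
    cpSub (Xp s j + Xp t k) π ↔ 1 ≤ π (s, j) ∧ 1 ≤ π (t, k) := by
  unfold Xp; exact cpSub_pair h _

lemma cpSub_Xp_triple {s t u : ℕ} {j k l : ℤ} (h1 : ((s, j) : ℕ × ℤ) ≠ (t, k))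
    (h2 : ((s, j) : ℕ × ℤ) ≠ (u, l)) (h3 : ((t, k) : ℕ × ℤ) ≠ (u, l)) (π : CPart) :
    cpSub (Xp s j + Xp t k + Xp u l) π ↔ 1 ≤ π (s, j) ∧ 1 ≤ π (t, k) ∧ 1 ≤ π (u, l) := by
  unfold Xp; exact cpSub_triple h1 h2 h3 _

lemma phi_inj_lemma : (∀ s i s' i' : ℕ, 1 ≤ s → s ≤ 8 → 1 ≤ i → 1 ≤ s' → s' ≤ 8 → 1 ≤ i' →
      phi s i = phi s' i' → s = s' ∧ i = i') := by
  intro s i s' i' hs1 hs2 hi hs1' hs2' hi' h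
  interval_cases s <;> interval_cases s' <;>
    simp_all [phi, Prod.ext_iff, Fin.ext_iff] <;> omega

lemma phi_img_lemma : ((fun q : ℕ × ℕ => phi q.1 q.2) '' {q | 1 ≤ q.1 ∧ q.1 ≤ 8 ∧ 1 ≤ q.2} =
      {p : ℕ × Fin 3 | (p.2 = 0 ∧ 2 ≤ p.1) ∨ (p.2 = 1 ∧ 2 ≤ p.1) ∨
        (p.2 = 2 ∧ (p.1 % 3 = 1 ∨ p.1 % 3 = 2) ∧ p.1 ≠ 2)}) := by
  ext ⟨r, c⟩
  constructor
  · rintro ⟨⟨s, i⟩, ⟨hs1, hs2, hi⟩, heq⟩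
    simp only at hs1 hs2 hi heq
    rw [← heq]
    simp only [Set.mem_setOf_eq]
    interval_cases s <;> simp [phi, Fin.ext_iff] <;> omega
  · rintro (⟨hc, hr⟩ | ⟨hc, hr⟩ | ⟨hc, hr, hr2⟩) <;> subst hc
    · have h3 : r % 3 = 0 ∨ r % 3 = 1 ∨ r % 3 = 2 := by omega
      rcases h3 with h | h | h
      · exact ⟨(4, r/3), ⟨by norm_num, by norm_num, by omega⟩, by simp [phi, Prod.ext_iff]; omega⟩
      · exact ⟨(7, (r-1)/3), ⟨by norm_num, by norm_num, by omega⟩, by simp [phi, Prod.ext_iff]; omega⟩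
      · exact ⟨(2, (r+1)/3), ⟨by norm_num, by norm_num, by omega⟩, by simp [phi, Prod.ext_iff]; omega⟩
    · have h3 : r % 3 = 0 ∨ r % 3 = 1 ∨ r % 3 = 2 := by omega
      rcases h3 with h | h | h
      · exact ⟨(5, r/3), ⟨by norm_num, by norm_num, by omega⟩, by simp [phi, Prod.ext_iff]; omega⟩
      · exact ⟨(6, (r-1)/3), ⟨by norm_num, by norm_num, by omega⟩, by simp [phi, Prod.ext_iff]; omega⟩
      · exact ⟨(3, (r+1)/3), ⟨by norm_num, by norm_num, by omega⟩, by simp [phi, Prod.ext_iff]; omega⟩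
    · rcases hr with h | h
      · exact ⟨(1, (r+2)/3), ⟨by norm_num, by norm_num, by omega⟩, by simp [phi, Prod.ext_iff]; omega⟩
      · exact ⟨(8, (r-2)/3), ⟨by norm_num, by norm_num, by omega⟩, by simp [phi, Prod.ext_iff]; omega⟩

end Helpers
set_option maxHeartbeats 4000000 in
lemma partb (π : CPart) (hπ : ∀ p ∈ π.support, (1 ≤ p.1 ∧ p.1 ≤ 8) ∧ p.2 < 0)
    (f : (ℕ × Fin 3) →₀ ℕ)
    (hf : ∀ s i : ℕ, 1 ≤ s → s ≤ 8 → 1 ≤ i → f (phi s i) = π (s, -(i : ℤ)))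
    (hf0 : ∀ p : ℕ × Fin 3,
      p ∉ (fun q : ℕ × ℕ => phi q.1 q.2) '' {q | 1 ≤ q.1 ∧ q.1 ≤ 8 ∧ 1 ≤ q.2} → f p = 0) :
    (∀ ρ ∈ Rset, ¬ cpSub ρ π) ↔ ColoredCond f := by
  have hπ0 : ∀ (s : ℕ) (j : ℤ), 0 ≤ j → π (s, j) = 0 := by
    intro s j hj
    by_contra h
    exact absurd (hπ (s, j) (Finsupp.mem_support_iff.2 h)).2 (by omega)
  have hz : ∀ (r : ℕ) (c : Fin 3),
      ¬((c = 0 ∧ 2 ≤ r) ∨ (c = 1 ∧ 2 ≤ r) ∨ (c = 2 ∧ (r % 3 = 1 ∨ r % 3 = 2) ∧ r ≠ 2)) →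
      f (r, c) = 0 := fun r c h => hf0 (r, c) (by rw [phi_img_lemma]; exact h)
  have A1 : ∀ i : ℕ, f (3*i+1, 2) = π (1, -((i:ℤ)+1)) := by
    intro i
    have h := hf 1 (i+1) (by norm_num) (by norm_num) (by omega)
    simp only [phi] at h
    rw [show 3*(i+1)-2 = 3*i+1 by omega] at h
    push_cast at h
    exact h
  have A2 : ∀ i : ℕ, f (3*i+2, 0) = π (2, -((i:ℤ)+1)) := by
    intro i
    have h := hf 2 (i+1) (by norm_num) (by norm_num) (by omega)
    simp only [phi] at h
    rw [show 3*(i+1)-1 = 3*i+2 by omega] at h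
    push_cast at h
    exact h
  have A3 : ∀ i : ℕ, f (3*i+2, 1) = π (3, -((i:ℤ)+1)) := by
    intro i
    have h := hf 3 (i+1) (by norm_num) (by norm_num) (by omega)
    simp only [phi] at h
    rw [show 3*(i+1)-1 = 3*i+2 by omega] at h
    push_cast at h
    exact h
  have A4 : ∀ i : ℕ, f (3*i+3, 0) = π (4, -((i:ℤ)+1)) := by
    intro i
    have h := hf 4 (i+1) (by norm_num) (by norm_num) (by omega)
    simp only [phi] at h
    rw [show 3*(i+1) = 3*i+3 by omega] at h
    push_cast at h
    exact h
  have A5 : ∀ i : ℕ, f (3*i+3, 1) = π (5, -((i:ℤ)+1)) := by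
    intro i
    have h := hf 5 (i+1) (by norm_num) (by norm_num) (by omega)
    simp only [phi] at h
    rw [show 3*(i+1) = 3*i+3 by omega] at h
    push_cast at h
    exact h
  have A6 : ∀ i : ℕ, f (3*i+4, 1) = π (6, -((i:ℤ)+1)) := by
    intro i
    have h := hf 6 (i+1) (by norm_num) (by norm_num) (by omega)
    simp only [phi] at h
    rw [show 3*(i+1)+1 = 3*i+4 by omega] at h
    push_cast at h
    exact h
  have A7 : ∀ i : ℕ, f (3*i+4, 0) = π (7, -((i:ℤ)+1)) := by
    intro i
    have h := hf 7 (i+1) (by norm_num) (by norm_num) (by omega)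
    simp only [phi] at h
    rw [show 3*(i+1)+1 = 3*i+4 by omega] at h
    push_cast at h
    exact h
  have A8 : ∀ i : ℕ, f (3*i+5, 2) = π (8, -((i:ℤ)+1)) := by
    intro i
    have h := hf 8 (i+1) (by norm_num) (by norm_num) (by omega)
    simp only [phi] at h
    rw [show 3*(i+1)+2 = 3*i+5 by omega] at h
    push_cast at h
    exact h
  have D1 : ∀ i : ℕ, f (3*i+4, 2) = π (1, -((i:ℤ)+2)) := by
    intro i
    have h := hf 1 (i+2) (by norm_num) (by norm_num) (by omega)
    simp only [phi] at h
    rw [show 3*(i+2)-2 = 3*i+4 by omega] at h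
    push_cast at h
    exact h
  have D2 : ∀ i : ℕ, f (3*i+5, 0) = π (2, -((i:ℤ)+2)) := by
    intro i
    have h := hf 2 (i+2) (by norm_num) (by norm_num) (by omega)
    simp only [phi] at h
    rw [show 3*(i+2)-1 = 3*i+5 by omega] at h
    push_cast at h
    exact h
  have D3 : ∀ i : ℕ, f (3*i+5, 1) = π (3, -((i:ℤ)+2)) := by
    intro i
    have h := hf 3 (i+2) (by norm_num) (by norm_num) (by omega)
    simp only [phi] at h
    rw [show 3*(i+2)-1 = 3*i+5 by omega] at h
    push_cast at h
    exact h
  have G4 : ∀ i : ℕ, f (3*(i+1)+3, 0) = π (4, -((i:ℤ)+2)) := by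
    intro i
    have h := hf 4 (i+2) (by norm_num) (by norm_num) (by omega)
    simp only [phi] at h
    rw [show 3*(i+2) = 3*(i+1)+3 by omega] at h
    push_cast at h
    exact h
  have G5 : ∀ i : ℕ, f (3*(i+1)+3, 1) = π (5, -((i:ℤ)+2)) := by
    intro i
    have h := hf 5 (i+2) (by norm_num) (by norm_num) (by omega)
    simp only [phi] at h
    rw [show 3*(i+2) = 3*(i+1)+3 by omega] at h
    push_cast at h
    exact h
  have G6a : ∀ i : ℕ, f (3*(i+1)+1, 1) = π (6, -((i:ℤ)+1)) := by
    intro i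
    have h := hf 6 (i+1) (by norm_num) (by norm_num) (by omega)
    simp only [phi] at h
    push_cast at h
    exact h
  have G6b : ∀ i : ℕ, f (3*(i+1)+4, 1) = π (6, -((i:ℤ)+2)) := by
    intro i
    have h := hf 6 (i+2) (by norm_num) (by norm_num) (by omega)
    simp only [phi] at h
    rw [show 3*(i+2)+1 = 3*(i+1)+4 by omega] at h
    push_cast at h
    exact h
  have G7a : ∀ i : ℕ, f (3*(i+1)+1, 0) = π (7, -((i:ℤ)+1)) := by
    intro i
    have h := hf 7 (i+1) (by norm_num) (by norm_num) (by omega)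
    simp only [phi] at h
    push_cast at h
    exact h
  have G7b : ∀ i : ℕ, f (3*(i+1)+4, 0) = π (7, -((i:ℤ)+2)) := by
    intro i
    have h := hf 7 (i+2) (by norm_num) (by norm_num) (by omega)
    simp only [phi] at h
    rw [show 3*(i+2)+1 = 3*(i+1)+4 by omega] at h
    push_cast at h
    exact h
  have G8a : ∀ i : ℕ, f (3*(i+1)+2, 2) = π (8, -((i:ℤ)+1)) := by
    intro i
    have h := hf 8 (i+1) (by norm_num) (by norm_num) (by omega)
    simp only [phi] at h
    push_cast at h
    exact h
  have G8b : ∀ i : ℕ, f (3*(i+1)+5, 2) = π (8, -((i:ℤ)+2)) := by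
    intro i
    have h := hf 8 (i+2) (by norm_num) (by norm_num) (by omega)
    simp only [phi] at h
    rw [show 3*(i+2)+2 = 3*(i+1)+5 by omega] at h
    push_cast at h
    exact h
  have C6 : ∀ i : ℕ, f (3*i+1, 1) = π (6, -(i:ℤ)) := by
    intro i
    rcases Nat.eq_zero_or_pos i with rfl | hp
    · rw [show (3*0+1:ℕ) = 1 by norm_num, hz 1 1 (by decide), hπ0 6 _ (by simp)]
    · obtain ⟨i', rfl⟩ : ∃ i', i = i'+1 := ⟨i-1, by omega⟩
      have h := hf 6 (i'+1) (by norm_num) (by norm_num) (by omega)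
      simp only [phi] at h
      exact h
  have C7 : ∀ i : ℕ, f (3*i+1, 0) = π (7, -(i:ℤ)) := by
    intro i
    rcases Nat.eq_zero_or_pos i with rfl | hp
    · rw [show (3*0+1:ℕ) = 1 by norm_num, hz 1 0 (by decide), hπ0 7 _ (by simp)]
    · obtain ⟨i', rfl⟩ : ∃ i', i = i'+1 := ⟨i-1, by omega⟩
      have h := hf 7 (i'+1) (by norm_num) (by norm_num) (by omega)
      simp only [phi] at h
      exact h
  have C8 : ∀ i : ℕ, f (3*i+2, 2) = π (8, -(i:ℤ)) := by
    intro i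
    rcases Nat.eq_zero_or_pos i with rfl | hp
    · rw [show (3*0+2:ℕ) = 2 by norm_num, hz 2 2 (by decide), hπ0 8 _ (by simp)]
    · obtain ⟨i', rfl⟩ : ∃ i', i = i'+1 := ⟨i-1, by omega⟩
      have h := hf 8 (i'+1) (by norm_num) (by norm_num) (by omega)
      simp only [phi] at h
      exact h
  have Z2 : ∀ i : ℕ, f (3*i+3, 2) = 0 := by
    intro i
    refine hz (3*i+3) 2 ?_
    rintro (⟨h2, _⟩ | ⟨h2, _⟩ | ⟨_, h2, _⟩)
    · exact absurd h2 (by decide)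
    · exact absurd h2 (by decide)
    · omega
  have s12 : f (1, 2) = π (1, -1) := by
    have h := hf 1 1 le_rfl (by norm_num) le_rfl
    simp only [phi] at h
    norm_num at h
    exact h
  have s20 : f (2, 0) = π (2, -1) := by
    have h := hf 2 1 (by norm_num) (by norm_num) le_rfl
    simp only [phi] at h
    norm_num at h
    exact h
  have s21 : f (2, 1) = π (3, -1) := by
    have h := hf 3 1 (by norm_num) (by norm_num) le_rfl
    simp only [phi] at h
    norm_num at h
    exact h
  have fin3 : ∀ c : Fin 3, c = 0 ∨ c = 1 ∨ c = 2 := by decide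
  have eqmem : ∀ p ∈ eqPairs, (1 ≤ p.1 ∧ p.1 ≤ 8) ∧ (1 ≤ p.2 ∧ p.2 ≤ 8) := by decide
  constructor
  · -- relations forbidden → colored conditions
    intro hR
    have Q1 : ∀ s, 1 ≤ s → s ≤ 8 → ∀ j : ℤ, π (s, j) ≤ 1 := by
      intro s hs1 hs2 j
      have hmem : ((s, s) : ℕ × ℕ) ∈ eqPairs := by interval_cases s <;> decide
      have h := hR (Xp s j + Xp s j)
        (by simp only [Rset, ltR, Set.mem_union, Set.mem_setOf_eq]
            exact Or.inl (Or.inl ⟨j, (s, s), hmem, rfl⟩))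
      rw [cpSub_Xp_same] at h
      omega
    have Qeq : ∀ a b, ((a, b) : ℕ × ℕ) ∈ eqPairs → a ≠ b → ∀ j : ℤ,
        π (a, j) = 0 ∨ π (b, j) = 0 := by
      intro a b hab hne j
      have h := hR (Xp a j + Xp b j)
        (by simp only [Rset, ltR, Set.mem_union, Set.mem_setOf_eq]
            exact Or.inl (Or.inl ⟨j, (a, b), hab, rfl⟩))
      rw [cpSub_Xp_pair (fun hc => hne (congrArg Prod.fst hc))] at h
      omega
    have Qadj : ∀ a b, ((a, b) : ℕ × ℕ) ∈ adjPairs → ∀ j k : ℤ, k = j - 1 →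
        π (a, k) = 0 ∨ π (b, j) = 0 := by
      intro a b hab j k hk
      subst hk
      have h := hR (Xp a (j-1) + Xp b j)
        (by simp only [Rset, ltR, Set.mem_union, Set.mem_setOf_eq]
            exact Or.inl (Or.inr ⟨j, (a, b), hab, rfl⟩))
      rw [cpSub_Xp_pair (by intro hc; have h2 := congrArg Prod.snd hc; simp only at h2; omega)] at h
      omega
    have Qc1 : ∀ j k : ℤ, k = j - 1 → π (3, k) = 0 ∨ π (4, j) = 0 ∨ π (1, j) = 0 := by
      intro j k hk
      subst hk
      have h := hR (Xp 3 (j-1) + Xp 4 j + Xp 1 j)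
        (by simp only [Rset, ltR, Set.mem_union, Set.mem_setOf_eq]
            exact Or.inr ⟨j, Or.inl rfl⟩)
      rw [cpSub_Xp_triple (by intro hc; simpa using congrArg Prod.fst hc)
        (by intro hc; simpa using congrArg Prod.fst hc)
        (by intro hc; simpa using congrArg Prod.fst hc)] at h
      omega
    have Qc2 : ∀ j k : ℤ, k = j - 1 → π (8, k) = 0 ∨ π (4, k) = 0 ∨ π (6, j) = 0 := by
      intro j k hk
      subst hk
      have h := hR (Xp 8 (j-1) + Xp 4 (j-1) + Xp 6 j)
        (by simp only [Rset, ltR, Set.mem_union, Set.mem_setOf_eq]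
            exact Or.inr ⟨j, Or.inr rfl⟩)
      rw [cpSub_Xp_triple (by intro hc; simpa using congrArg Prod.fst hc)
        (by intro hc; simpa using congrArg Prod.fst hc)
        (by intro hc; simpa using congrArg Prod.fst hc)] at h
      omega
    -- clause (0)
    have hb1 : ∀ p : ℕ × Fin 3, f p ≤ 1 := by
      rintro ⟨r, c⟩
      rcases Nat.lt_or_ge r 2 with h | h
      · interval_cases r
        · rw [hz 0 c (by rintro (⟨_, h2⟩ | ⟨_, h2⟩ | ⟨_, h2, _⟩) <;> omega)]; omega
        · rcases fin3 c with rfl | rfl | rfl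
          · rw [hz 1 0 (by decide)]; omega
          · rw [hz 1 1 (by decide)]; omega
          · rw [s12]; exact Q1 1 (by norm_num) (by norm_num) (-1)
      · obtain ⟨q, hq⟩ : ∃ q, r = 3*q+2 ∨ r = 3*q+3 ∨ r = 3*q+4 := ⟨(r-2)/3, by omega⟩
        rcases hq with rfl | rfl | rfl <;> rcases fin3 c with rfl | rfl | rfl
        · rw [A2 q]; exact Q1 2 (by norm_num) (by norm_num) _
        · rw [A3 q]; exact Q1 3 (by norm_num) (by norm_num) _
        · rw [C8 q]; exact Q1 8 (by norm_num) (by norm_num) _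
        · rw [A4 q]; exact Q1 4 (by norm_num) (by norm_num) _
        · rw [A5 q]; exact Q1 5 (by norm_num) (by norm_num) _
        · rw [Z2 q]; omega
        · rw [A7 q]; exact Q1 7 (by norm_num) (by norm_num) _
        · rw [A6 q]; exact Q1 6 (by norm_num) (by norm_num) _
        · rw [D1 q]; exact Q1 1 (by norm_num) (by norm_num) _
    -- clause (3) worker
    have sym : ∀ (ra : ℕ) (ca : Fin 3) (rb : ℕ) (cb : Fin 3),
        ((ra, ca) : ℕ × Fin 3) ≠ (rb, cb) → ra ≤ rb → rb ≤ ra + 1 →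
        f (ra, ca) + f (rb, cb) ≤ 1 := by
      intro ra ca rb cb hne hab hba
      rcases Nat.lt_or_ge ra 2 with hlow | hhigh
      · interval_cases ra
        · rw [hz 0 ca (by rintro (⟨_, h2⟩ | ⟨_, h2⟩ | ⟨_, h2, _⟩) <;> omega)]
          have := hb1 (rb, cb); omega
        · rcases fin3 ca with rfl | rfl | rfl
          · rw [hz 1 0 (by decide)]; have := hb1 (rb, cb); omega
          · rw [hz 1 1 (by decide)]; have := hb1 (rb, cb); omega
          · have hrb : rb = 1 ∨ rb = 2 := by omega
            rcases hrb with rfl | rfl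
            · rcases fin3 cb with rfl | rfl | rfl
              · rw [hz 1 0 (by decide)]; have := hb1 ((1:ℕ), (2 : Fin 3)); omega
              · rw [hz 1 1 (by decide)]; have := hb1 ((1:ℕ), (2 : Fin 3)); omega
              · exact absurd rfl hne
            · rcases fin3 cb with rfl | rfl | rfl
              · rw [s12, s20]
                have h1 := Qeq 2 1 (by decide) (by decide) (-1)
                have h2 := Q1 1 (by norm_num) (by norm_num) (-1)
                have h3 := Q1 2 (by norm_num) (by norm_num) (-1)
                omega
              · rw [s12, s21]
                have h1 := Qeq 3 1 (by decide) (by decide) (-1)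
                have h2 := Q1 1 (by norm_num) (by norm_num) (-1)
                have h3 := Q1 3 (by norm_num) (by norm_num) (-1)
                omega
              · rw [hz 2 2 (by decide)]; have := hb1 ((1:ℕ), (2 : Fin 3)); omega
      · obtain ⟨q, hq⟩ : ∃ q, ra = 3*q+2 ∨ ra = 3*q+3 ∨ ra = 3*q+4 := ⟨(ra-2)/3, by omega⟩
        have hrb : rb = ra ∨ rb = ra + 1 := by omega
        rcases hq with rfl | rfl | rfl
        · -- ra = 3q+2
          rcases hrb with rfl | hrb1
          · rcases fin3 ca with rfl | rfl | rfl <;> rcases fin3 cb with rfl | rfl | rfl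
            · exact absurd rfl hne
            · rw [A2 q, A3 q]
              have h1 := Qeq 3 2 (by decide) (by decide) (-((q:ℤ)+1))
              have h2 := Q1 2 (by norm_num) (by norm_num) (-((q:ℤ)+1))
              have h3 := Q1 3 (by norm_num) (by norm_num) (-((q:ℤ)+1))
              omega
            · rw [A2 q, C8 q]
              have h1 := Qadj 2 8 (by decide) (-(q:ℤ)) (-((q:ℤ)+1)) (by ring)
              have h2 := Q1 2 (by norm_num) (by norm_num) (-((q:ℤ)+1))
              have h3 := Q1 8 (by norm_num) (by norm_num) (-(q:ℤ))
              omega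
            · rw [A3 q, A2 q]
              have h1 := Qeq 3 2 (by decide) (by decide) (-((q:ℤ)+1))
              have h2 := Q1 2 (by norm_num) (by norm_num) (-((q:ℤ)+1))
              have h3 := Q1 3 (by norm_num) (by norm_num) (-((q:ℤ)+1))
              omega
            · exact absurd rfl hne
            · rw [A3 q, C8 q]
              have h1 := Qadj 3 8 (by decide) (-(q:ℤ)) (-((q:ℤ)+1)) (by ring)
              have h2 := Q1 3 (by norm_num) (by norm_num) (-((q:ℤ)+1))
              have h3 := Q1 8 (by norm_num) (by norm_num) (-(q:ℤ))
              omega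
            · rw [C8 q, A2 q]
              have h1 := Qadj 2 8 (by decide) (-(q:ℤ)) (-((q:ℤ)+1)) (by ring)
              have h2 := Q1 2 (by norm_num) (by norm_num) (-((q:ℤ)+1))
              have h3 := Q1 8 (by norm_num) (by norm_num) (-(q:ℤ))
              omega
            · rw [C8 q, A3 q]
              have h1 := Qadj 3 8 (by decide) (-(q:ℤ)) (-((q:ℤ)+1)) (by ring)
              have h2 := Q1 3 (by norm_num) (by norm_num) (-((q:ℤ)+1))
              have h3 := Q1 8 (by norm_num) (by norm_num) (-(q:ℤ))
              omega
            · exact absurd rfl hne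
          · rw [show rb = 3*q+3 by omega]
            rcases fin3 ca with rfl | rfl | rfl <;> rcases fin3 cb with rfl | rfl | rfl
            · rw [A2 q, A4 q]
              have h1 := Qeq 4 2 (by decide) (by decide) (-((q:ℤ)+1))
              have h2 := Q1 2 (by norm_num) (by norm_num) (-((q:ℤ)+1))
              have h3 := Q1 4 (by norm_num) (by norm_num) (-((q:ℤ)+1))
              omega
            · rw [A2 q, A5 q]
              have h1 := Qeq 5 2 (by decide) (by decide) (-((q:ℤ)+1))
              have h2 := Q1 2 (by norm_num) (by norm_num) (-((q:ℤ)+1))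
              have h3 := Q1 5 (by norm_num) (by norm_num) (-((q:ℤ)+1))
              omega
            · rw [Z2 q]; have := hb1 ((3*q+2:ℕ), (0 : Fin 3)); omega
            · rw [A3 q, A4 q]
              have h1 := Qeq 4 3 (by decide) (by decide) (-((q:ℤ)+1))
              have h2 := Q1 3 (by norm_num) (by norm_num) (-((q:ℤ)+1))
              have h3 := Q1 4 (by norm_num) (by norm_num) (-((q:ℤ)+1))
              omega
            · rw [A3 q, A5 q]
              have h1 := Qeq 5 3 (by decide) (by decide) (-((q:ℤ)+1))
              have h2 := Q1 3 (by norm_num) (by norm_num) (-((q:ℤ)+1))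
              have h3 := Q1 5 (by norm_num) (by norm_num) (-((q:ℤ)+1))
              omega
            · rw [Z2 q]; have := hb1 ((3*q+2:ℕ), (1 : Fin 3)); omega
            · rw [C8 q, A4 q]
              have h1 := Qadj 4 8 (by decide) (-(q:ℤ)) (-((q:ℤ)+1)) (by ring)
              have h2 := Q1 4 (by norm_num) (by norm_num) (-((q:ℤ)+1))
              have h3 := Q1 8 (by norm_num) (by norm_num) (-(q:ℤ))
              omega
            · rw [C8 q, A5 q]
              have h1 := Qadj 5 8 (by decide) (-(q:ℤ)) (-((q:ℤ)+1)) (by ring)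
              have h2 := Q1 5 (by norm_num) (by norm_num) (-((q:ℤ)+1))
              have h3 := Q1 8 (by norm_num) (by norm_num) (-(q:ℤ))
              omega
            · rw [Z2 q]; have := hb1 ((3*q+2:ℕ), (2 : Fin 3)); omega
        · -- ra = 3q+3
          rcases hrb with rfl | hrb1
          · rcases fin3 ca with rfl | rfl | rfl <;> rcases fin3 cb with rfl | rfl | rfl
            · exact absurd rfl hne
            · rw [A4 q, A5 q]
              have h1 := Qeq 5 4 (by decide) (by decide) (-((q:ℤ)+1))
              have h2 := Q1 4 (by norm_num) (by norm_num) (-((q:ℤ)+1))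
              have h3 := Q1 5 (by norm_num) (by norm_num) (-((q:ℤ)+1))
              omega
            · rw [Z2 q]; have := hb1 ((3*q+3:ℕ), (0 : Fin 3)); omega
            · rw [A5 q, A4 q]
              have h1 := Qeq 5 4 (by decide) (by decide) (-((q:ℤ)+1))
              have h2 := Q1 4 (by norm_num) (by norm_num) (-((q:ℤ)+1))
              have h3 := Q1 5 (by norm_num) (by norm_num) (-((q:ℤ)+1))
              omega
            · exact absurd rfl hne
            · rw [Z2 q]; have := hb1 ((3*q+3:ℕ), (1 : Fin 3)); omega
            · rw [Z2 q]; have := hb1 ((3*q+3:ℕ), (0 : Fin 3)); omega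
            · rw [Z2 q]; have := hb1 ((3*q+3:ℕ), (1 : Fin 3)); omega
            · exact absurd rfl hne
          · rw [show rb = 3*q+4 by omega]
            rcases fin3 ca with rfl | rfl | rfl <;> rcases fin3 cb with rfl | rfl | rfl
            · rw [A4 q, A7 q]
              have h1 := Qeq 7 4 (by decide) (by decide) (-((q:ℤ)+1))
              have h2 := Q1 4 (by norm_num) (by norm_num) (-((q:ℤ)+1))
              have h3 := Q1 7 (by norm_num) (by norm_num) (-((q:ℤ)+1))
              omega
            · rw [A4 q, A6 q]
              have h1 := Qeq 6 4 (by decide) (by decide) (-((q:ℤ)+1))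
              have h2 := Q1 4 (by norm_num) (by norm_num) (-((q:ℤ)+1))
              have h3 := Q1 6 (by norm_num) (by norm_num) (-((q:ℤ)+1))
              omega
            · rw [A4 q, D1 q]
              have h1 := Qadj 1 4 (by decide) (-((q:ℤ)+1)) (-((q:ℤ)+2)) (by ring)
              have h2 := Q1 4 (by norm_num) (by norm_num) (-((q:ℤ)+1))
              have h3 := Q1 1 (by norm_num) (by norm_num) (-((q:ℤ)+2))
              omega
            · rw [A5 q, A7 q]
              have h1 := Qeq 7 5 (by decide) (by decide) (-((q:ℤ)+1))
              have h2 := Q1 5 (by norm_num) (by norm_num) (-((q:ℤ)+1))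
              have h3 := Q1 7 (by norm_num) (by norm_num) (-((q:ℤ)+1))
              omega
            · rw [A5 q, A6 q]
              have h1 := Qeq 6 5 (by decide) (by decide) (-((q:ℤ)+1))
              have h2 := Q1 5 (by norm_num) (by norm_num) (-((q:ℤ)+1))
              have h3 := Q1 6 (by norm_num) (by norm_num) (-((q:ℤ)+1))
              omega
            · rw [A5 q, D1 q]
              have h1 := Qadj 1 5 (by decide) (-((q:ℤ)+1)) (-((q:ℤ)+2)) (by ring)
              have h2 := Q1 5 (by norm_num) (by norm_num) (-((q:ℤ)+1))
              have h3 := Q1 1 (by norm_num) (by norm_num) (-((q:ℤ)+2))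
              omega
            · rw [Z2 q]; have := hb1 ((3*q+4:ℕ), (0 : Fin 3)); omega
            · rw [Z2 q]; have := hb1 ((3*q+4:ℕ), (1 : Fin 3)); omega
            · rw [Z2 q]; have := hb1 ((3*q+4:ℕ), (2 : Fin 3)); omega
        · -- ra = 3q+4
          rcases hrb with rfl | hrb1
          · rcases fin3 ca with rfl | rfl | rfl <;> rcases fin3 cb with rfl | rfl | rfl
            · exact absurd rfl hne
            · rw [A7 q, A6 q]
              have h1 := Qeq 7 6 (by decide) (by decide) (-((q:ℤ)+1))
              have h2 := Q1 6 (by norm_num) (by norm_num) (-((q:ℤ)+1))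
              have h3 := Q1 7 (by norm_num) (by norm_num) (-((q:ℤ)+1))
              omega
            · rw [A7 q, D1 q]
              have h1 := Qadj 1 7 (by decide) (-((q:ℤ)+1)) (-((q:ℤ)+2)) (by ring)
              have h2 := Q1 7 (by norm_num) (by norm_num) (-((q:ℤ)+1))
              have h3 := Q1 1 (by norm_num) (by norm_num) (-((q:ℤ)+2))
              omega
            · rw [A6 q, A7 q]
              have h1 := Qeq 7 6 (by decide) (by decide) (-((q:ℤ)+1))
              have h2 := Q1 6 (by norm_num) (by norm_num) (-((q:ℤ)+1))
              have h3 := Q1 7 (by norm_num) (by norm_num) (-((q:ℤ)+1))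
              omega
            · exact absurd rfl hne
            · rw [A6 q, D1 q]
              have h1 := Qadj 1 6 (by decide) (-((q:ℤ)+1)) (-((q:ℤ)+2)) (by ring)
              have h2 := Q1 6 (by norm_num) (by norm_num) (-((q:ℤ)+1))
              have h3 := Q1 1 (by norm_num) (by norm_num) (-((q:ℤ)+2))
              omega
            · rw [D1 q, A7 q]
              have h1 := Qadj 1 7 (by decide) (-((q:ℤ)+1)) (-((q:ℤ)+2)) (by ring)
              have h2 := Q1 7 (by norm_num) (by norm_num) (-((q:ℤ)+1))
              have h3 := Q1 1 (by norm_num) (by norm_num) (-((q:ℤ)+2))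
              omega
            · rw [D1 q, A6 q]
              have h1 := Qadj 1 6 (by decide) (-((q:ℤ)+1)) (-((q:ℤ)+2)) (by ring)
              have h2 := Q1 6 (by norm_num) (by norm_num) (-((q:ℤ)+1))
              have h3 := Q1 1 (by norm_num) (by norm_num) (-((q:ℤ)+2))
              omega
            · exact absurd rfl hne
          · rw [show rb = 3*q+5 by omega]
            rcases fin3 ca with rfl | rfl | rfl <;> rcases fin3 cb with rfl | rfl | rfl
            · rw [A7 q, D2 q]
              have h1 := Qadj 2 7 (by decide) (-((q:ℤ)+1)) (-((q:ℤ)+2)) (by ring)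
              have h2 := Q1 7 (by norm_num) (by norm_num) (-((q:ℤ)+1))
              have h3 := Q1 2 (by norm_num) (by norm_num) (-((q:ℤ)+2))
              omega
            · rw [A7 q, D3 q]
              have h1 := Qadj 3 7 (by decide) (-((q:ℤ)+1)) (-((q:ℤ)+2)) (by ring)
              have h2 := Q1 7 (by norm_num) (by norm_num) (-((q:ℤ)+1))
              have h3 := Q1 3 (by norm_num) (by norm_num) (-((q:ℤ)+2))
              omega
            · rw [A7 q, A8 q]
              have h1 := Qeq 8 7 (by decide) (by decide) (-((q:ℤ)+1))
              have h2 := Q1 7 (by norm_num) (by norm_num) (-((q:ℤ)+1))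
              have h3 := Q1 8 (by norm_num) (by norm_num) (-((q:ℤ)+1))
              omega
            · rw [A6 q, D2 q]
              have h1 := Qadj 2 6 (by decide) (-((q:ℤ)+1)) (-((q:ℤ)+2)) (by ring)
              have h2 := Q1 6 (by norm_num) (by norm_num) (-((q:ℤ)+1))
              have h3 := Q1 2 (by norm_num) (by norm_num) (-((q:ℤ)+2))
              omega
            · rw [A6 q, D3 q]
              have h1 := Qadj 3 6 (by decide) (-((q:ℤ)+1)) (-((q:ℤ)+2)) (by ring)
              have h2 := Q1 6 (by norm_num) (by norm_num) (-((q:ℤ)+1))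
              have h3 := Q1 3 (by norm_num) (by norm_num) (-((q:ℤ)+2))
              omega
            · rw [A6 q, A8 q]
              have h1 := Qeq 8 6 (by decide) (by decide) (-((q:ℤ)+1))
              have h2 := Q1 6 (by norm_num) (by norm_num) (-((q:ℤ)+1))
              have h3 := Q1 8 (by norm_num) (by norm_num) (-((q:ℤ)+1))
              omega
            · rw [D1 q, D2 q]
              have h1 := Qeq 2 1 (by decide) (by decide) (-((q:ℤ)+2))
              have h2 := Q1 1 (by norm_num) (by norm_num) (-((q:ℤ)+2))
              have h3 := Q1 2 (by norm_num) (by norm_num) (-((q:ℤ)+2))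
              omega
            · rw [D1 q, D3 q]
              have h1 := Qeq 3 1 (by decide) (by decide) (-((q:ℤ)+2))
              have h2 := Q1 1 (by norm_num) (by norm_num) (-((q:ℤ)+2))
              have h3 := Q1 3 (by norm_num) (by norm_num) (-((q:ℤ)+2))
              omega
            · rw [D1 q, A8 q]
              have h1 := Qadj 1 8 (by decide) (-((q:ℤ)+1)) (-((q:ℤ)+2)) (by ring)
              have h2 := Q1 1 (by norm_num) (by norm_num) (-((q:ℤ)+2))
              have h3 := Q1 8 (by norm_num) (by norm_num) (-((q:ℤ)+1))
              omega
    refine ⟨hb1, ?_, ⟨hz 1 0 (by decide), hz 1 1 (by decide), hz 2 2 (by decide)⟩, ?_, ?_, ?_⟩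
    · -- clause (1)
      intro r hr
      by_contra hcon
      push_neg at hcon
      have h0 : f (r, 2) = 0 := by
        refine hz r 2 ?_
        rintro (⟨h2, _⟩ | ⟨h2, _⟩ | ⟨_, h2, _⟩)
        · exact absurd h2 (by decide)
        · exact absurd h2 (by decide)
        · rcases h2 with h2 | h2
          · exact hcon.1 h2
          · exact hcon.2 h2
      omega
    · -- clause (3)
      rintro ⟨ra, ca⟩ ⟨rb, cb⟩ hne h1 h2
      have h1' : ra ≤ rb + 1 := h1
      have h2' : rb ≤ ra + 1 := h2
      rcases le_total ra rb with hab | hab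
      · exact sym ra ca rb cb hne hab (by omega)
      · have := sym rb cb ra ca (Ne.symm hne) hab (by omega)
        omega
    · -- clause (4)
      intro i
      refine ⟨?_, ?_, ?_, ?_, ?_, ?_⟩
      · rw [A2 i, A4 i, A6 i, D2 i]
        have e1 := Qeq 4 2 (by decide) (by decide) (-((i:ℤ)+1))
        have e2 := Qeq 6 2 (by decide) (by decide) (-((i:ℤ)+1))
        have e3 := Qeq 6 4 (by decide) (by decide) (-((i:ℤ)+1))
        have a1 := Qadj 2 2 (by decide) (-((i:ℤ)+1)) (-((i:ℤ)+2)) (by ring)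
        have a2 := Qadj 2 4 (by decide) (-((i:ℤ)+1)) (-((i:ℤ)+2)) (by ring)
        have a3 := Qadj 2 6 (by decide) (-((i:ℤ)+1)) (-((i:ℤ)+2)) (by ring)
        have b1 := Q1 2 (by norm_num) (by norm_num) (-((i:ℤ)+1))
        have b2 := Q1 4 (by norm_num) (by norm_num) (-((i:ℤ)+1))
        have b3 := Q1 6 (by norm_num) (by norm_num) (-((i:ℤ)+1))
        have b4 := Q1 2 (by norm_num) (by norm_num) (-((i:ℤ)+2))
        omega
      · rw [A3 i, A5 i, D1 i, D3 i]
        have e1 := Qeq 5 3 (by decide) (by decide) (-((i:ℤ)+1))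
        have e2 := Qeq 3 1 (by decide) (by decide) (-((i:ℤ)+2))
        have a1 := Qadj 1 3 (by decide) (-((i:ℤ)+1)) (-((i:ℤ)+2)) (by ring)
        have a2 := Qadj 3 3 (by decide) (-((i:ℤ)+1)) (-((i:ℤ)+2)) (by ring)
        have a3 := Qadj 1 5 (by decide) (-((i:ℤ)+1)) (-((i:ℤ)+2)) (by ring)
        have a4 := Qadj 3 5 (by decide) (-((i:ℤ)+1)) (-((i:ℤ)+2)) (by ring)
        have b1 := Q1 3 (by norm_num) (by norm_num) (-((i:ℤ)+1))
        have b2 := Q1 5 (by norm_num) (by norm_num) (-((i:ℤ)+1))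
        have b3 := Q1 1 (by norm_num) (by norm_num) (-((i:ℤ)+2))
        have b4 := Q1 3 (by norm_num) (by norm_num) (-((i:ℤ)+2))
        omega
      · rw [C8 i, A5 i, A7 i, A8 i]
        have e1 := Qeq 7 5 (by decide) (by decide) (-((i:ℤ)+1))
        have e2 := Qeq 8 5 (by decide) (by decide) (-((i:ℤ)+1))
        have e3 := Qeq 8 7 (by decide) (by decide) (-((i:ℤ)+1))
        have a1 := Qadj 5 8 (by decide) (-(i:ℤ)) (-((i:ℤ)+1)) (by ring)
        have a2 := Qadj 7 8 (by decide) (-(i:ℤ)) (-((i:ℤ)+1)) (by ring)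
        have a3 := Qadj 8 8 (by decide) (-(i:ℤ)) (-((i:ℤ)+1)) (by ring)
        have b1 := Q1 8 (by norm_num) (by norm_num) (-(i:ℤ))
        have b2 := Q1 5 (by norm_num) (by norm_num) (-((i:ℤ)+1))
        have b3 := Q1 7 (by norm_num) (by norm_num) (-((i:ℤ)+1))
        have b4 := Q1 8 (by norm_num) (by norm_num) (-((i:ℤ)+1))
        omega
      · rw [C7 i, A3 i, A4 i, A7 i]
        have e1 := Qeq 4 3 (by decide) (by decide) (-((i:ℤ)+1))
        have e2 := Qeq 7 3 (by decide) (by decide) (-((i:ℤ)+1))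
        have e3 := Qeq 7 4 (by decide) (by decide) (-((i:ℤ)+1))
        have a1 := Qadj 3 7 (by decide) (-(i:ℤ)) (-((i:ℤ)+1)) (by ring)
        have a2 := Qadj 4 7 (by decide) (-(i:ℤ)) (-((i:ℤ)+1)) (by ring)
        have a3 := Qadj 7 7 (by decide) (-(i:ℤ)) (-((i:ℤ)+1)) (by ring)
        have b1 := Q1 7 (by norm_num) (by norm_num) (-(i:ℤ))
        have b2 := Q1 3 (by norm_num) (by norm_num) (-((i:ℤ)+1))
        have b3 := Q1 4 (by norm_num) (by norm_num) (-((i:ℤ)+1))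
        have b4 := Q1 7 (by norm_num) (by norm_num) (-((i:ℤ)+1))
        omega
      · rw [C6 i, C8 i, A5 i, A6 i]
        have e1 := Qeq 8 6 (by decide) (by decide) (-(i:ℤ))
        have e2 := Qeq 6 5 (by decide) (by decide) (-((i:ℤ)+1))
        have a1 := Qadj 5 6 (by decide) (-(i:ℤ)) (-((i:ℤ)+1)) (by ring)
        have a2 := Qadj 6 6 (by decide) (-(i:ℤ)) (-((i:ℤ)+1)) (by ring)
        have a3 := Qadj 5 8 (by decide) (-(i:ℤ)) (-((i:ℤ)+1)) (by ring)
        have a4 := Qadj 6 8 (by decide) (-(i:ℤ)) (-((i:ℤ)+1)) (by ring)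
        have b1 := Q1 6 (by norm_num) (by norm_num) (-(i:ℤ))
        have b2 := Q1 8 (by norm_num) (by norm_num) (-(i:ℤ))
        have b3 := Q1 5 (by norm_num) (by norm_num) (-((i:ℤ)+1))
        have b4 := Q1 6 (by norm_num) (by norm_num) (-((i:ℤ)+1))
        omega
      · rw [A1 i, A2 i, A5 i, D1 i]
        have e1 := Qeq 2 1 (by decide) (by decide) (-((i:ℤ)+1))
        have e2 := Qeq 5 1 (by decide) (by decide) (-((i:ℤ)+1))
        have e3 := Qeq 5 2 (by decide) (by decide) (-((i:ℤ)+1))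
        have a1 := Qadj 1 1 (by decide) (-((i:ℤ)+1)) (-((i:ℤ)+2)) (by ring)
        have a2 := Qadj 1 2 (by decide) (-((i:ℤ)+1)) (-((i:ℤ)+2)) (by ring)
        have a3 := Qadj 1 5 (by decide) (-((i:ℤ)+1)) (-((i:ℤ)+2)) (by ring)
        have b1 := Q1 1 (by norm_num) (by norm_num) (-((i:ℤ)+1))
        have b2 := Q1 2 (by norm_num) (by norm_num) (-((i:ℤ)+1))
        have b3 := Q1 5 (by norm_num) (by norm_num) (-((i:ℤ)+1))
        have b4 := Q1 1 (by norm_num) (by norm_num) (-((i:ℤ)+2))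
        omega
    · -- clause (5)
      intro i
      constructor
      · rw [C6 i, A4 i, A8 i]
        have h := Qc2 (-(i:ℤ)) (-((i:ℤ)+1)) (by ring)
        have b1 := Q1 6 (by norm_num) (by norm_num) (-(i:ℤ))
        have b2 := Q1 4 (by norm_num) (by norm_num) (-((i:ℤ)+1))
        have b3 := Q1 8 (by norm_num) (by norm_num) (-((i:ℤ)+1))
        omega
      · rw [A1 i, A4 i, D3 i]
        have h := Qc1 (-((i:ℤ)+1)) (-((i:ℤ)+2)) (by ring)
        have b1 := Q1 1 (by norm_num) (by norm_num) (-((i:ℤ)+1))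
        have b2 := Q1 4 (by norm_num) (by norm_num) (-((i:ℤ)+1))
        have b3 := Q1 3 (by norm_num) (by norm_num) (-((i:ℤ)+2))
        omega
  · -- colored conditions → relations forbidden
    rintro ⟨c0, c1, c2, c3, c4, c5⟩
    have pair3 : ∀ (r1 r2 : ℕ) (c1' c2' : Fin 3), ((r1, c1') : ℕ × Fin 3) ≠ (r2, c2') →
        r1 ≤ r2 + 1 → r2 ≤ r1 + 1 → f (r1, c1') + f (r2, c2') ≤ 1 :=
      fun r1 r2 c1' c2' h h1 h2 => c3 (r1, c1') (r2, c2') h h1 h2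
    have Q1 : ∀ s, 1 ≤ s → s ≤ 8 → ∀ j : ℤ, π (s, j) ≤ 1 := by
      intro s hs1 hs2 j
      rcases le_or_gt 0 j with hj | hj
      · rw [hπ0 s j hj]; omega
      · obtain ⟨i, rfl⟩ : ∃ i : ℕ, j = -((i:ℤ)+1) := ⟨(-j-1).toNat, by omega⟩
        have h := hf s (i+1) hs1 hs2 (by omega)
        push_cast at h
        rw [← h]
        exact c0 _
    have Qeq : ∀ a b, ((a, b) : ℕ × ℕ) ∈ eqPairs → a ≠ b → ∀ j : ℤ,
        π (a, j) = 0 ∨ π (b, j) = 0 := by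
      intro a b hab hne j
      rcases le_or_gt 0 j with hj | hj
      · exact Or.inr (hπ0 b j hj)
      · obtain ⟨i, rfl⟩ : ∃ i : ℕ, j = -((i:ℤ)+1) := ⟨(-j-1).toNat, by omega⟩
        simp only [eqPairs, List.mem_cons, List.not_mem_nil, or_false, Prod.mk.injEq] at hab
        rcases hab with ⟨rfl,rfl⟩|⟨rfl,rfl⟩|⟨rfl,rfl⟩|⟨rfl,rfl⟩|⟨rfl,rfl⟩|⟨rfl,rfl⟩|⟨rfl,rfl⟩|⟨rfl,rfl⟩|⟨rfl,rfl⟩|⟨rfl,rfl⟩|⟨rfl,rfl⟩|⟨rfl,rfl⟩|⟨rfl,rfl⟩|⟨rfl,rfl⟩|⟨rfl,rfl⟩|⟨rfl,rfl⟩|⟨rfl,rfl⟩|⟨rfl,rfl⟩|⟨rfl,rfl⟩|⟨rfl,rfl⟩|⟨rfl,rfl⟩|⟨rfl,rfl⟩|⟨rfl,rfl⟩|⟨rfl,rfl⟩|⟨rfl,rfl⟩|⟨rfl,rfl⟩|⟨rfl,rfl⟩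
        · exact absurd rfl hne
        · rw [← A2 i, ← A1 i]
          have h := pair3 (3*i+2) (3*i+1) 0 2 (by simp) (by omega) (by omega); omega
        · exact absurd rfl hne
        · rw [← A3 i, ← A1 i]
          have h := pair3 (3*i+2) (3*i+1) 1 2 (by simp) (by omega) (by omega); omega
        · rw [← A3 i, ← A2 i]
          have h := pair3 (3*i+2) (3*i+2) 1 0 (by simp) (by omega) (by omega); omega
        · exact absurd rfl hne
        · rw [← A4 i, ← A2 i]
          have h := pair3 (3*i+3) (3*i+2) 0 0 (by simp) (by omega) (by omega); omega
        · rw [← A4 i, ← A3 i]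
          have h := pair3 (3*i+3) (3*i+2) 0 1 (by simp) (by omega) (by omega); omega
        · exact absurd rfl hne
        · rw [← A5 i, ← A1 i]
          have h := (c4 i).2.2.2.2.2; omega
        · rw [← A5 i, ← A2 i]
          have h := pair3 (3*i+3) (3*i+2) 1 0 (by simp) (by omega) (by omega); omega
        · rw [← A5 i, ← A3 i]
          have h := pair3 (3*i+3) (3*i+2) 1 1 (by simp) (by omega) (by omega); omega
        · rw [← A5 i, ← A4 i]
          have h := pair3 (3*i+3) (3*i+3) 1 0 (by simp) (by omega) (by omega); omega
        · exact absurd rfl hne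
        · rw [← A6 i, ← A2 i]
          have h := (c4 i).1; omega
        · rw [← A6 i, ← A4 i]
          have h := pair3 (3*i+4) (3*i+3) 1 0 (by simp) (by omega) (by omega); omega
        · rw [← A6 i, ← A5 i]
          have h := pair3 (3*i+4) (3*i+3) 1 1 (by simp) (by omega) (by omega); omega
        · exact absurd rfl hne
        · rw [← A7 i, ← A3 i]
          have h := (c4 i).2.2.2.1; omega
        · rw [← A7 i, ← A4 i]
          have h := pair3 (3*i+4) (3*i+3) 0 0 (by simp) (by omega) (by omega); omega
        · rw [← A7 i, ← A5 i]
          have h := pair3 (3*i+4) (3*i+3) 0 1 (by simp) (by omega) (by omega); omega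
        · rw [← A7 i, ← A6 i]
          have h := pair3 (3*i+4) (3*i+4) 0 1 (by simp) (by omega) (by omega); omega
        · exact absurd rfl hne
        · rw [← A8 i, ← A5 i]
          have h := (c4 i).2.2.1; omega
        · rw [← A8 i, ← A6 i]
          have h := pair3 (3*i+5) (3*i+4) 2 1 (by simp) (by omega) (by omega); omega
        · rw [← A8 i, ← A7 i]
          have h := pair3 (3*i+5) (3*i+4) 2 0 (by simp) (by omega) (by omega); omega
        · exact absurd rfl hne
    have Qadj : ∀ a b, ((a, b) : ℕ × ℕ) ∈ adjPairs → ∀ j k : ℤ, k = j - 1 →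
        π (a, k) = 0 ∨ π (b, j) = 0 := by
      intro a b hab j k hk
      rcases le_or_gt 0 j with hj | hj
      · exact Or.inr (hπ0 b j hj)
      · obtain ⟨i, rfl⟩ : ∃ i : ℕ, j = -((i:ℤ)+1) := ⟨(-j-1).toNat, by omega⟩
        obtain rfl : k = -((i:ℤ)+2) := by omega
        simp only [adjPairs, List.mem_cons, List.not_mem_nil, or_false, Prod.mk.injEq] at hab
        rcases hab with ⟨rfl,rfl⟩|⟨rfl,rfl⟩|⟨rfl,rfl⟩|⟨rfl,rfl⟩|⟨rfl,rfl⟩|⟨rfl,rfl⟩|⟨rfl,rfl⟩|⟨rfl,rfl⟩|⟨rfl,rfl⟩|⟨rfl,rfl⟩|⟨rfl,rfl⟩|⟨rfl,rfl⟩|⟨rfl,rfl⟩|⟨rfl,rfl⟩|⟨rfl,rfl⟩|⟨rfl,rfl⟩|⟨rfl,rfl⟩|⟨rfl,rfl⟩|⟨rfl,rfl⟩|⟨rfl,rfl⟩|⟨rfl,rfl⟩|⟨rfl,rfl⟩|⟨rfl,rfl⟩|⟨rfl,rfl⟩|⟨rfl,rfl⟩|⟨rfl,rfl⟩|⟨r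fl,rfl⟩
        · rw [← D1 i, ← A1 i]
          have h := (c4 i).2.2.2.2.2; omega
        · rw [← D1 i, ← A2 i]
          have h := (c4 i).2.2.2.2.2; omega
        · rw [← D1 i, ← A3 i]
          have h := (c4 i).2.1; omega
        · rw [← D1 i, ← A4 i]
          have h := pair3 (3*i+4) (3*i+3) 2 0 (by simp) (by omega) (by omega); omega
        · rw [← D1 i, ← A5 i]
          have h := pair3 (3*i+4) (3*i+3) 2 1 (by simp) (by omega) (by omega); omega
        · rw [← D1 i, ← A6 i]
          have h := pair3 (3*i+4) (3*i+4) 2 1 (by simp) (by omega) (by omega); omega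
        · rw [← D1 i, ← A7 i]
          have h := pair3 (3*i+4) (3*i+4) 2 0 (by simp) (by omega) (by omega); omega
        · rw [← D1 i, ← A8 i]
          have h := pair3 (3*i+4) (3*i+5) 2 2 (by simp) (by omega) (by omega); omega
        · rw [← D2 i, ← A2 i]
          have h := (c4 i).1; omega
        · rw [← D2 i, ← A4 i]
          have h := (c4 i).1; omega
        · rw [← D2 i, ← A6 i]
          have h := pair3 (3*i+5) (3*i+4) 0 1 (by simp) (by omega) (by omega); omega
        · rw [← D2 i, ← A7 i]
          have h := pair3 (3*i+5) (3*i+4) 0 0 (by simp) (by omega) (by omega); omega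
        · rw [← D2 i, ← A8 i]
          have h := pair3 (3*i+5) (3*i+5) 0 2 (by simp) (by omega) (by omega); omega
        · rw [← D3 i, ← A3 i]
          have h := (c4 i).2.1; omega
        · rw [← D3 i, ← A5 i]
          have h := (c4 i).2.1; omega
        · rw [← D3 i, ← A6 i]
          have h := pair3 (3*i+5) (3*i+4) 1 1 (by simp) (by omega) (by omega); omega
        · rw [← D3 i, ← A7 i]
          have h := pair3 (3*i+5) (3*i+4) 1 0 (by simp) (by omega) (by omega); omega
        · rw [← D3 i, ← A8 i]
          have h := pair3 (3*i+5) (3*i+5) 1 2 (by simp) (by omega) (by omega); omega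
        · rw [← G4 i, ← G7a i]
          have h := (c4 (i+1)).2.2.2.1; omega
        · rw [← G4 i, ← A8 i]
          have h := pair3 (3*(i+1)+3) (3*i+5) 0 2 (by simp) (by omega) (by omega); omega
        · rw [← G5 i, ← G6a i]
          have h := (c4 (i+1)).2.2.2.2.1; omega
        · rw [← G5 i, ← A8 i]
          have h := pair3 (3*(i+1)+3) (3*i+5) 1 2 (by simp) (by omega) (by omega); omega
        · rw [← G6b i, ← G6a i]
          have h := (c4 (i+1)).2.2.2.2.1; omega
        · rw [← G6b i, ← G8a i]
          have h := (c4 (i+1)).2.2.2.2.1; omega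
        · rw [← G7b i, ← G7a i]
          have h := (c4 (i+1)).2.2.2.1; omega
        · rw [← G7b i, ← G8a i]
          have h := (c4 (i+1)).2.2.1; omega
        · rw [← G8b i, ← G8a i]
          have h := (c4 (i+1)).2.2.1; omega
    have Qc1 : ∀ j k : ℤ, k = j - 1 → π (3, k) = 0 ∨ π (4, j) = 0 ∨ π (1, j) = 0 := by
      intro j k hk
      rcases le_or_gt 0 j with hj | hj
      · exact Or.inr (Or.inl (hπ0 4 j hj))
      · obtain ⟨i, rfl⟩ : ∃ i : ℕ, j = -((i:ℤ)+1) := ⟨(-j-1).toNat, by omega⟩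
        obtain rfl : k = -((i:ℤ)+2) := by omega
        rw [← D3 i, ← A4 i, ← A1 i]
        have h := (c5 i).2
        have b1 := c0 (3*i+1, 2)
        have b2 := c0 (3*i+3, 0)
        have b3 := c0 (3*i+5, 1)
        omega
    have Qc2 : ∀ j k : ℤ, k = j - 1 → π (8, k) = 0 ∨ π (4, k) = 0 ∨ π (6, j) = 0 := by
      intro j k hk
      rcases le_or_gt 0 j with hj | hj
      · exact Or.inr (Or.inr (hπ0 6 j hj))
      · obtain ⟨i, rfl⟩ : ∃ i : ℕ, j = -((i:ℤ)+1) := ⟨(-j-1).toNat, by omega⟩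
        obtain rfl : k = -((i:ℤ)+2) := by omega
        rw [← G8b i, ← G4 i, ← G6a i]
        have h := (c5 (i+1)).1
        have b1 := c0 (3*(i+1)+1, 1)
        have b2 := c0 (3*(i+1)+3, 0)
        have b3 := c0 (3*(i+1)+5, 2)
        omega
    intro ρ hρ
    simp only [Rset, ltR, Set.mem_union, Set.mem_setOf_eq] at hρ
    rcases hρ with (⟨j, p, hp, rfl⟩ | ⟨j, p, hp, rfl⟩) | ⟨j, rfl | rfl⟩
    · rcases eq_or_ne p.1 p.2 with he | hne
      · rw [← he, cpSub_Xp_same]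
        have := Q1 p.1 ((eqmem p hp).1.1) ((eqmem p hp).1.2) j
        omega
      · rw [cpSub_Xp_pair (fun hc => hne (congrArg Prod.fst hc))]
        have h2 := Qeq p.1 p.2 (by rwa [Prod.mk.eta]) hne j
        rcases h2 with h2 | h2 <;> simp [h2]
    · rw [cpSub_Xp_pair (by intro hc; have h2 := congrArg Prod.snd hc; simp only at h2; omega)]
      have := Qadj p.1 p.2 (by rwa [Prod.mk.eta]) j (j-1) rfl
      omega
    · rw [cpSub_Xp_triple (by intro hc; simpa using congrArg Prod.fst hc)
        (by intro hc; simpa using congrArg Prod.fst hc)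
        (by intro hc; simpa using congrArg Prod.fst hc)]
      have := Qc1 j (j-1) rfl
      omega
    · rw [cpSub_Xp_triple (by intro hc; simpa using congrArg Prod.fst hc)
        (by intro hc; simpa using congrArg Prod.fst hc)
        (by intro hc; simpa using congrArg Prod.fst hc)]
      have := Qc2 j (j-1) rfl
      omega

/-- (a) `φ` is injective with the indicated image, and (b) for a colored partition `π`
supported in negative degrees, `π` contains no `ρ ∈ R` iff the corresponding 3-colored
partition `f` (with `f(φ(s,i)) = π(s,−i)` and `f = 0` off the image of `φ`) satisfies
conditions (1)–(5). -/
theorem phi_injective_image_and_difference_conditions :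
    (∀ s i s' i' : ℕ, 1 ≤ s → s ≤ 8 → 1 ≤ i → 1 ≤ s' → s' ≤ 8 → 1 ≤ i' →
      phi s i = phi s' i' → s = s' ∧ i = i') ∧
    ((fun q : ℕ × ℕ => phi q.1 q.2) '' {q | 1 ≤ q.1 ∧ q.1 ≤ 8 ∧ 1 ≤ q.2} =
      {p : ℕ × Fin 3 | (p.2 = 0 ∧ 2 ≤ p.1) ∨ (p.2 = 1 ∧ 2 ≤ p.1) ∨
        (p.2 = 2 ∧ (p.1 % 3 = 1 ∨ p.1 % 3 = 2) ∧ p.1 ≠ 2)}) ∧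
    (∀ π : CPart, (∀ p ∈ π.support, (1 ≤ p.1 ∧ p.1 ≤ 8) ∧ p.2 < 0) →
      ∀ f : (ℕ × Fin 3) →₀ ℕ,
        (∀ s i : ℕ, 1 ≤ s → s ≤ 8 → 1 ≤ i → f (phi s i) = π (s, -(i : ℤ))) →
        (∀ p : ℕ × Fin 3,
          p ∉ (fun q : ℕ × ℕ => phi q.1 q.2) '' {q | 1 ≤ q.1 ∧ q.1 ≤ 8 ∧ 1 ≤ q.2} →
          f p = 0) →
        ((∀ ρ ∈ Rset, ¬ cpSub ρ π) ↔ ColoredCond f)) :=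
  ⟨phi_inj_lemma, phi_img_lemma, fun π hπ f hf hf0 => partb π hπ f hf hf0⟩
end

section
/- For every j ∈ ℤ, the sum of N(π) over all colored partitions π of length 3 with shape {j−1, j, j+1} (one part of each degree j−1, j, j+1, with arbitrary colors) equals 64. -/
/-
A colored partition is the multiset of its parts, and length, shape, colors and `⊂` are read off
that multiset. Shape `{j−1, j, j+1}` forces `π = X_a(j−1) X_b(j) X_c(j+1)` with `a, b, c ∈ {1,…,8}`.
With one part in each degree, `π` contains no `X_{i₁}(k) X_{i₂}(k)`, and the only candidates
`X_{i₁}(k−1) X_{i₂}(k)` are `X_a(j−1) X_b(j)` and `X_b(j) X_c(j+1)`. So `N(π) = 1` when both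
`(a, b)` and `(b, c)` are adjacent pairs of `lt(R̄)` and `N(π) = 0` otherwise, and the chains
`a → b → c` in the table of adjacent pairs number 64.
-/

open Finsupp

lemma toMultiset_Xp (s : ℕ) (d : ℤ) : toMultiset (Xp s d) = {(s, d)} := by
  rw [Xp, toMultiset_single, one_nsmul]

lemma cpValid_iff_forall_mem_toMultiset (π : CPart) :
    cpValid π ↔ ∀ p ∈ toMultiset π, 1 ≤ p.1 ∧ p.1 ≤ 8 := by
  simp only [cpValid, mem_toMultiset]

lemma cpLength_eq_card_toMultiset (π : CPart) : cpLength π = Multiset.card (toMultiset π) :=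
  (card_toMultiset π).symm

lemma cpShape_eq_map_toMultiset (π : CPart) : cpShape π = (toMultiset π).map Prod.snd := by
  rw [toMultiset_apply, Finsupp.multiset_map_sum, cpShape]
  simp only [Multiset.nsmul_singleton, Multiset.map_replicate]

lemma cpSub_iff_toMultiset_le (ρ π : CPart) : cpSub ρ π ↔ toMultiset ρ ≤ toMultiset π := by
  rw [← coe_orderIsoMultiset, OrderIso.le_iff_le]
  rfl

noncomputable def triple (a b c : ℕ) (j : ℤ) : CPart := Xp a (j - 1) + Xp b j + Xp c (j + 1)

lemma toMultiset_triple (a b c : ℕ) (j : ℤ) :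
    toMultiset (triple a b c j) = {(a, j - 1), (b, j), (c, j + 1)} := by
  simp only [triple, map_add, toMultiset_Xp, Multiset.singleton_add, Multiset.cons_add,
    Multiset.insert_eq_cons]

lemma toMultiset_injective : Function.Injective (toMultiset : CPart → Multiset (ℕ × ℤ)) :=
  Multiset.toFinsupp.symm.injective

lemma cpShape_eq_iff_exists_triple (π : CPart) (j : ℤ) :
    cpShape π = {j - 1, j, j + 1} ↔ ∃ a b c, π = triple a b c j := by
  constructor
  · rw [cpShape_eq_map_toMultiset, Multiset.insert_eq_cons, ← Multiset.map_eq_cons]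
    rintro ⟨⟨a, _⟩, ha, rfl, hrest⟩
    rw [Multiset.insert_eq_cons, ← Multiset.map_eq_cons] at hrest
    obtain ⟨⟨b, _⟩, hb, rfl, hlast⟩ := hrest
    obtain ⟨⟨c, _⟩, hc, rfl⟩ := Multiset.map_eq_singleton.mp hlast
    refine ⟨a, b, c, toMultiset_injective ?_⟩
    rw [toMultiset_triple, ← Multiset.cons_erase ha, ← Multiset.cons_erase hb, hc]
    rfl
  · rintro ⟨a, b, c, rfl⟩
    simp [cpShape_eq_map_toMultiset, toMultiset_triple]

lemma triple_injective (j : ℤ) :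
    Function.Injective fun t : ℕ × ℕ × ℕ => triple t.1 t.2.1 t.2.2 j := by
  rintro ⟨a, b, c⟩ ⟨a', b', c'⟩ h
  replace h := congr_arg toMultiset h
  simp only [toMultiset_triple] at h
  have ha : (a, j - 1) ∈ ({(a', j - 1), (b', j), (c', j + 1)} : Multiset (ℕ × ℤ)) := by
    rw [← h]; simp
  have hb : (b, j) ∈ ({(a', j - 1), (b', j), (c', j + 1)} : Multiset (ℕ × ℤ)) := by
    rw [← h]; simp
  have hc : (c, j + 1) ∈ ({(a', j - 1), (b', j), (c', j + 1)} : Multiset (ℕ × ℤ)) := by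
    rw [← h]; simp
  simp only [Multiset.insert_eq_cons, Multiset.mem_cons, Multiset.mem_singleton,
    Prod.mk.injEq] at ha hb hc ⊢
  omega

lemma cpLength_triple (a b c : ℕ) (j : ℤ) : cpLength (triple a b c j) = 3 := by
  rw [cpLength_eq_card_toMultiset, toMultiset_triple]
  rfl

lemma cpValid_triple_iff (a b c : ℕ) (j : ℤ) :
    cpValid (triple a b c j) ↔ a ∈ Finset.Icc 1 8 ∧ b ∈ Finset.Icc 1 8 ∧ c ∈ Finset.Icc 1 8 := by
  simp [cpValid_iff_forall_mem_toMultiset, toMultiset_triple]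

lemma setOf_shape_eq_image_triple (j : ℤ) :
    {π : CPart | cpValid π ∧ cpLength π = 3 ∧ cpShape π = {j - 1, j, j + 1}} =
      (fun t : ℕ × ℕ × ℕ => triple t.1 t.2.1 t.2.2 j) ''
        ↑(Finset.Icc 1 8 ×ˢ Finset.Icc 1 8 ×ˢ Finset.Icc 1 8) := by
  ext π
  simp only [Set.mem_ofPred_eq, cpShape_eq_iff_exists_triple, Set.mem_image, Finset.coe_product,
    Set.mem_prod, Finset.mem_coe, Prod.exists]
  constructor
  · rintro ⟨hv, -, a, b, c, rfl⟩
    exact ⟨a, b, c, (cpValid_triple_iff a b c j).mp hv, rfl⟩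
  · rintro ⟨a, b, c, habc, rfl⟩
    exact ⟨(cpValid_triple_iff a b c j).mpr habc, cpLength_triple a b c j, a, b, c, rfl⟩

lemma not_cpSub_triple_of_same_degree (p q a b c : ℕ) (k j : ℤ) :
    ¬ cpSub (Xp p k + Xp q k) (triple a b c j) := by
  intro h
  rw [cpSub_iff_toMultiset_le, toMultiset_triple] at h
  have hnodup : ({j - 1, j, j + 1} : Multiset ℤ).Nodup := by
    simp only [Multiset.insert_eq_cons, Multiset.nodup_cons, Multiset.mem_cons,
      Multiset.mem_singleton, Multiset.nodup_singleton, and_true]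
    omega
  have := Multiset.nodup_of_le (Multiset.map_le_map (f := Prod.snd) h) hnodup
  simp [toMultiset_Xp] at this

lemma cpSub_triple_iff_of_adjacent (p q a b c : ℕ) (k j : ℤ) :
    cpSub (Xp p (k - 1) + Xp q k) (triple a b c j) ↔
      (p = a ∧ q = b ∧ k = j) ∨ (p = b ∧ q = c ∧ k = j + 1) := by
  rw [cpSub_iff_toMultiset_le, toMultiset_triple, map_add, toMultiset_Xp, toMultiset_Xp,
    Multiset.le_iff_subset (by simp)]
  simp only [Multiset.insert_eq_cons, Multiset.singleton_add, Multiset.cons_subset,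
    Multiset.singleton_subset, Multiset.mem_cons, Multiset.mem_singleton, Prod.mk.injEq]
  omega

lemma mem_Eset_triple_iff (ρ : CPart) (a b c : ℕ) (j : ℤ) :
    ρ ∈ Eset (triple a b c j) ↔
      (ρ = Xp a (j - 1) + Xp b j ∧ (a, b) ∈ adjPairs) ∨
        (ρ = Xp b j + Xp c (j + 1) ∧ (b, c) ∈ adjPairs) := by
  simp only [Eset, ltR, Set.mem_ofPred_eq, Set.mem_union]
  constructor
  · rintro ⟨⟨k, p, -, rfl⟩ | ⟨k, p, hp, rfl⟩, hsub⟩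
    · exact (not_cpSub_triple_of_same_degree _ _ a b c k j hsub).elim
    · rcases (cpSub_triple_iff_of_adjacent _ _ a b c k j).mp hsub with
        ⟨rfl, rfl, rfl⟩ | ⟨rfl, rfl, rfl⟩
      · exact Or.inl ⟨rfl, hp⟩
      · exact Or.inr ⟨by rw [add_sub_cancel_right], hp⟩
  · rintro (⟨rfl, hab⟩ | ⟨rfl, hbc⟩)
    · exact ⟨Or.inr ⟨j, (a, b), hab, rfl⟩,
        (cpSub_triple_iff_of_adjacent a b a b c j j).mpr (Or.inl ⟨rfl, rfl, rfl⟩)⟩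
    · have hsub := (cpSub_triple_iff_of_adjacent b c a b c (j + 1) j).mpr
        (Or.inr ⟨rfl, rfl, rfl⟩)
      rw [add_sub_cancel_right] at hsub
      exact ⟨Or.inr ⟨j + 1, (b, c), hbc, by rw [add_sub_cancel_right]⟩, hsub⟩

lemma Npi_triple (a b c : ℕ) (j : ℤ) :
    Npi (triple a b c j) = if (a, b) ∈ adjPairs ∧ (b, c) ∈ adjPairs then 1 else 0 := by
  have hne : Xp a (j - 1) + Xp b j ≠ Xp b j + Xp c (j + 1) := by
    intro h
    have := congr_arg (fun ρ => (a, j - 1) ∈ toMultiset ρ) h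
    simp only [map_add, toMultiset_Xp, Multiset.singleton_add, Multiset.mem_cons,
      Multiset.mem_singleton, Prod.mk.injEq, sub_eq_self, one_ne_zero, and_false, or_false,
      false_or, eq_iff_iff, true_iff] at this
    omega
  have hE : Eset (triple a b c j) = {ρ | (ρ = Xp a (j - 1) + Xp b j ∧ (a, b) ∈ adjPairs) ∨
      (ρ = Xp b j + Xp c (j + 1) ∧ (b, c) ∈ adjPairs)} :=
    Set.ext fun ρ => mem_Eset_triple_iff ρ a b c j
  rw [Npi, hE]
  by_cases hab : (a, b) ∈ adjPairs <;> by_cases hbc : (b, c) ∈ adjPairs <;>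
    simp only [hab, hbc, and_true, and_false, or_false, false_or, Set.ofPred_eq_eq_singleton,
      Set.ncard_singleton, Set.ofPred_false, Set.ncard_empty, if_true, if_false]
  show ({_, _} : Set CPart).ncard - 1 = 1
  rw [Set.ncard_pair hne]

/-- The sum of `N(π)` over all colored partitions of length 3 and shape `{j−1,j,j+1}` is 64. -/
theorem sum_N_shape_jm1_j_jp1 (j : ℤ) :
    (∑ᶠ π ∈ {π : CPart | cpValid π ∧ cpLength π = 3 ∧ cpShape π = {j - 1, j, j + 1}},
      Npi π) = 64 := by
  rw [setOf_shape_eq_image_triple, finsum_mem_image (triple_injective j).injOn,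
    finsum_mem_coe_finset]
  simp only [Npi_triple]
  decide +kernel
end

section
/- For every j ∈ ℤ, the sum of N(π) over all colored partitions π of length 3 with shape {j−1, j−1, j} (two parts of degree j−1 and one part of degree j, with arbitrary colors) equals 162. -/
/-! A colored partition of shape `{j−1, j−1, j}` is `X_a(j−1) X_b(j−1) X_c(j)` for a unique
triple of colors with `a ≤ b`. The elements of `lt(R̄)` below it are `X_a(j−1) X_b(j−1)`, when
`(a, b)` or `(b, a)` is an equal-degree pair, and `X_s(j−1) X_c(j)` for each `s ∈ {a, b}` such
that `(s, c)` is an adjacent pair. These are pairwise distinct, so `N(π)` is their number minus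
one, and summing over the 288 triples gives 162. -/

open Finset

lemma Xp_apply (s t : ℕ) (k l : ℤ) : Xp s k (t, l) = if t = s ∧ l = k then 1 else 0 := by
  simp [Xp, Finsupp.single_apply, eq_comm, and_comm]

lemma cpLength_add (π σ : CPart) : cpLength (π + σ) = cpLength π + cpLength σ := by
  simp [cpLength, Finsupp.sum_add_index]

lemma cpLength_Xp (s : ℕ) (k : ℤ) : cpLength (Xp s k) = 1 := by
  simp [cpLength, Xp]

lemma cpShape_add (π σ : CPart) : cpShape (π + σ) = cpShape π + cpShape σ :=
  Finsupp.sum_add_index' (fun _ => Multiset.replicate_zero _)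
    (fun _ _ _ => Multiset.replicate_add _ _ _)

lemma cpShape_Xp (s : ℕ) (k : ℤ) : cpShape (Xp s k) = {k} := by
  rw [cpShape, Xp, Finsupp.sum_single_index] <;> simp

lemma cpValid_add (π σ : CPart) : cpValid (π + σ) ↔ cpValid π ∧ cpValid σ := by
  classical
  simp only [cpValid, Finsupp.support_add_eq_union, forall_mem_union]

lemma cpValid_Xp (s : ℕ) (k : ℤ) : cpValid (Xp s k) ↔ 1 ≤ s ∧ s ≤ 8 := by
  simp [cpValid, Xp]

lemma exists_eq_Xp_add_Xp_add_Xp {π : CPart} (h : cpLength π = 3) :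
    ∃ x y z : ℕ × ℤ, π = Xp x.1 x.2 + Xp y.1 y.2 + Xp z.1 z.2 := by
  classical
  have hcard : Multiset.card (Finsupp.toMultiset π) = 3 := by
    rw [Finsupp.card_toMultiset]; exact h
  obtain ⟨x, y, z, hxyz⟩ := Multiset.card_eq_three.1 hcard
  refine ⟨x, y, z, ?_⟩
  rw [← Finsupp.toMultiset_toFinsupp π, hxyz]
  simp [Multiset.insert_eq_cons, ← Multiset.singleton_add, Multiset.toFinsupp_add, Xp, add_assoc]

lemma triple_eq_shape_cases {k₁ k₂ k₃ j : ℤ} (h : ({k₁, k₂, k₃} : Multiset ℤ) = {j - 1, j - 1, j}) :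
    k₁ = j - 1 ∧ k₂ = j - 1 ∧ k₃ = j ∨ k₁ = j - 1 ∧ k₂ = j ∧ k₃ = j - 1 ∨
      k₁ = j ∧ k₂ = j - 1 ∧ k₃ = j - 1 := by
  have hmem : ∀ k ∈ ({k₁, k₂, k₃} : Multiset ℤ), k = j - 1 ∨ k = j := by
    intro k hk; rw [h] at hk; simpa using hk
  have hcount := congrArg (Multiset.count j) h
  simp only [Multiset.insert_eq_cons, Multiset.count_cons, Multiset.count_singleton] at hcount
  rcases hmem k₁ (by simp) with h₁ | h₁ <;> rcases hmem k₂ (by simp) with h₂ | h₂ <;>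
    rcases hmem k₃ (by simp) with h₃ | h₃ <;> split_ifs at hcount <;> omega

noncomputable def cpOfColors (j : ℤ) (t : ℕ × ℕ × ℕ) : CPart :=
  Xp t.1 (j - 1) + Xp t.2.1 (j - 1) + Xp t.2.2 j

def colorTriples : Finset (ℕ × ℕ × ℕ) :=
  (Icc 1 8 ×ˢ Icc 1 8 ×ˢ Icc 1 8).filter fun t => t.1 ≤ t.2.1

lemma mem_colorTriples {a b c : ℕ} :
    (a, b, c) ∈ colorTriples ↔ 1 ≤ a ∧ a ≤ b ∧ b ≤ 8 ∧ 1 ≤ c ∧ c ≤ 8 := by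
  simp only [colorTriples, mem_filter, mem_product, mem_Icc]
  omega

lemma Xp_min_add_Xp_max (a b : ℕ) (k : ℤ) :
    Xp (min a b) k + Xp (max a b) k = Xp a k + Xp b k := by
  rcases le_total a b with h | h
  · rw [min_eq_left h, max_eq_right h]
  · rw [min_eq_right h, max_eq_left h, add_comm]

lemma Xp_add_Xp_add_Xp_mem_image {a b c : ℕ} {j : ℤ} (ha : 1 ≤ a ∧ a ≤ 8) (hb : 1 ≤ b ∧ b ≤ 8)
    (hc : 1 ≤ c ∧ c ≤ 8) :
    Xp a (j - 1) + Xp b (j - 1) + Xp c j ∈ cpOfColors j '' colorTriples :=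
  ⟨(min a b, max a b, c), mem_colorTriples.2 (by omega), by
    rw [cpOfColors, Xp_min_add_Xp_max]⟩

lemma setOf_shape_eq_image (j : ℤ) :
    {π : CPart | cpValid π ∧ cpLength π = 3 ∧ cpShape π = {j - 1, j - 1, j}} =
      cpOfColors j '' colorTriples := by
  ext π
  constructor
  · rintro ⟨hvalid, hlength, hshape⟩
    obtain ⟨⟨s₁, k₁⟩, ⟨s₂, k₂⟩, ⟨s₃, k₃⟩, rfl⟩ := exists_eq_Xp_add_Xp_add_Xp hlength
    simp only [cpValid_add, cpValid_Xp] at hvalid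
    obtain ⟨⟨h₁, h₂⟩, h₃⟩ := hvalid
    rw [cpShape_add, cpShape_add, cpShape_Xp, cpShape_Xp, cpShape_Xp] at hshape
    rcases triple_eq_shape_cases hshape with ⟨rfl, rfl, rfl⟩ | ⟨rfl, rfl, rfl⟩ | ⟨rfl, rfl, rfl⟩
    · exact Xp_add_Xp_add_Xp_mem_image h₁ h₂ h₃
    · rw [add_right_comm]; exact Xp_add_Xp_add_Xp_mem_image h₁ h₃ h₂
    · rw [add_comm (Xp s₁ _), add_right_comm]; exact Xp_add_Xp_add_Xp_mem_image h₂ h₃ h₁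
  · rintro ⟨⟨a, b, c⟩, ht, rfl⟩
    rw [mem_coe, mem_colorTriples] at ht
    simp only [cpOfColors, Set.mem_ofPred_eq, cpValid_add, cpValid_Xp, cpLength_add, cpLength_Xp,
      cpShape_add, cpShape_Xp]
    exact ⟨by omega, trivial, rfl⟩

lemma cpOfColors_apply (j : ℤ) (a b c s : ℕ) (k : ℤ) :
    cpOfColors j (a, b, c) (s, k) =
      (if s = a ∧ k = j - 1 then 1 else 0) + (if s = b ∧ k = j - 1 then 1 else 0) +
        (if s = c ∧ k = j then 1 else 0) := by
  simp only [cpOfColors, Finsupp.add_apply, Xp_apply]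

lemma injOn_cpOfColors (j : ℤ) : Set.InjOn (cpOfColors j) colorTriples := by
  rintro ⟨a, b, c⟩ ht ⟨a', b', c'⟩ ht' h
  rw [mem_coe, mem_colorTriples] at ht ht'
  have hval (s : ℕ) (k : ℤ) := DFunLike.congr_fun h (s, k)
  simp only [cpOfColors_apply] at hval
  have hc : c = c' := by have := hval c j; split_ifs at this <;> omega
  have ha : a = a' ∨ a = b' := by have := hval a (j - 1); split_ifs at this <;> omega
  have hb : b = a' ∨ b = b' := by have := hval b (j - 1); split_ifs at this <;> omega
  have ha' : a' = a ∨ a' = b := by have := hval a' (j - 1); split_ifs at this <;> omega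
  have hb' : b' = a ∨ b' = b := by have := hval b' (j - 1); split_ifs at this <;> omega
  simp only [Prod.mk.injEq]
  omega

lemma Xp_add_Xp_le_cpOfColors_iff {p q a b c : ℕ} {k j : ℤ} :
    Xp p k + Xp q k ≤ cpOfColors j (a, b, c) ↔
      k = j - 1 ∧ (p = a ∧ q = b ∨ p = b ∧ q = a) := by
  constructor
  · intro h
    have hp := h (p, k)
    have hq := h (q, k)
    simp only [Finsupp.add_apply, Xp_apply, cpOfColors_apply, and_true, and_self, ↓reduceIte]
      at hp hq
    split_ifs at hp hq <;> omega
  · rintro ⟨rfl, ⟨rfl, rfl⟩ | ⟨rfl, rfl⟩⟩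
    · exact le_self_add
    · rw [add_comm]; exact le_self_add

lemma Xp_sub_one_add_Xp_le_cpOfColors_iff {p q a b c : ℕ} {k j : ℤ} :
    Xp p (k - 1) + Xp q k ≤ cpOfColors j (a, b, c) ↔ k = j ∧ q = c ∧ (p = a ∨ p = b) := by
  constructor
  · intro h
    have hp := h (p, k - 1)
    have hq := h (q, k)
    simp only [Finsupp.add_apply, Xp_apply, cpOfColors_apply, and_self, ↓reduceIte] at hp hq
    split_ifs at hp hq <;> omega
  · rintro ⟨rfl, rfl, rfl | rfl⟩
    · rw [cpOfColors, add_right_comm]; exact le_self_add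
    · rw [cpOfColors, add_assoc]; exact le_add_self

lemma Eset_cpOfColors (j : ℤ) (a b c : ℕ) :
    Eset (cpOfColors j (a, b, c)) =
      {ρ | ((a, b) ∈ eqPairs ∨ (b, a) ∈ eqPairs) ∧ ρ = Xp a (j - 1) + Xp b (j - 1)} ∪
        (fun s => Xp s (j - 1) + Xp c j) ''
          ({a, b} : Finset ℕ).filter (fun s => (s, c) ∈ adjPairs) := by
  ext ρ
  constructor
  · rintro ⟨⟨k, ⟨p, q⟩, hpq, rfl⟩ | ⟨k, ⟨p, q⟩, hpq, rfl⟩, hle⟩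
    · obtain ⟨rfl, ⟨rfl, rfl⟩ | ⟨rfl, rfl⟩⟩ := Xp_add_Xp_le_cpOfColors_iff.1 hle
      · exact Or.inl ⟨Or.inl hpq, rfl⟩
      · exact Or.inl ⟨Or.inr hpq, add_comm _ _⟩
    · obtain ⟨rfl, rfl, hp⟩ := Xp_sub_one_add_Xp_le_cpOfColors_iff.1 hle
      exact Or.inr ⟨p, by simpa [hpq] using hp, rfl⟩
  · rintro (⟨hab, rfl⟩ | ⟨s, hs, rfl⟩)
    · refine ⟨?_, Xp_add_Xp_le_cpOfColors_iff.2 ⟨rfl, Or.inl ⟨rfl, rfl⟩⟩⟩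
      rcases hab with h | h
      · exact Or.inl ⟨j - 1, (a, b), h, rfl⟩
      · exact Or.inl ⟨j - 1, (b, a), h, add_comm _ _⟩
    · simp only [coe_filter, mem_insert, mem_singleton, Set.mem_ofPred_eq] at hs
      exact ⟨Or.inr ⟨j, (s, c), hs.2, rfl⟩, Xp_sub_one_add_Xp_le_cpOfColors_iff.2 ⟨rfl, rfl, hs.1⟩⟩

def numLeadingTerms (a b c : ℕ) : ℕ :=
  (if (a, b) ∈ eqPairs ∨ (b, a) ∈ eqPairs then 1 else 0) +
    (({a, b} : Finset ℕ).filter fun s => (s, c) ∈ adjPairs).card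

lemma ncard_Eset_cpOfColors (j : ℤ) (a b c : ℕ) :
    (Eset (cpOfColors j (a, b, c))).ncard = numLeadingTerms a b c := by
  have hinj : Function.Injective fun s => Xp s (j - 1) + Xp c j := fun s s' h => by
    have := DFunLike.congr_fun h (s, j - 1)
    simp only [Finsupp.add_apply, Xp_apply, and_true, and_self, ↓reduceIte] at this
    split_ifs at this <;> omega
  rw [Eset_cpOfColors, Set.ncard_union_eq ?_ ((Set.finite_singleton _).subset fun _ h => h.2),
    Set.ncard_image_of_injective _ hinj, Set.ncard_coe_finset, numLeadingTerms]
  · congr 1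
    split_ifs with hab <;> simp [hab]
  · rw [Set.disjoint_left]
    rintro ρ ⟨-, rfl⟩ ⟨s, -, hs⟩
    have := DFunLike.congr_fun hs (c, j)
    simp only [Finsupp.add_apply, Xp_apply, and_self, ↓reduceIte] at this
    split_ifs at this <;> omega

/-- The sum of `N(π)` over all colored partitions of length 3 and shape `{j−1,j−1,j}` is 162. -/
theorem sum_N_shape_jm1_jm1_j (j : ℤ) :
    (∑ᶠ π ∈ {π : CPart | cpValid π ∧ cpLength π = 3 ∧ cpShape π = {j - 1, j - 1, j}},
      Npi π) = 162 := by
  rw [setOf_shape_eq_image, finsum_mem_image (injOn_cpOfColors j), finsum_mem_coe_finset]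
  calc ∑ t ∈ colorTriples, Npi (cpOfColors j t)
      = ∑ t ∈ colorTriples, (numLeadingTerms t.1 t.2.1 t.2.2 - 1) :=
        sum_congr rfl fun ⟨a, b, c⟩ _ => by rw [Npi, ncard_Eset_cpOfColors]
    _ = 162 := by decide +kernel
end
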